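/- arXiv:1912.06611 — 7 statements merged into one kernel-verified Lean document; each statement's English description precedes it below -/
import Mathlib

section
/- For any natural numbers i, j, n with 1 ≤ j ≤ i ≤ n, the integer j·C(i,j) divides lcm(1, 2, ..., n), where C(i,j) is the binomial coefficient. -/
/-- `lcmUpTo n` is `lcm(1, 2, ..., n)` (and `1` for `n = 0`). -/
def lcmUpTo (n : ℕ) : ℕ := (Finset.Icc 1 n).lcm id

/-
By Kummer's theorem, `v_p(C(i, j))` counts the carries when adding `j` and `i - j` in base `p`,
at positions `1, …, log_p i`. No carry occurs at a position `t` with `p ^ t ∣ j`, and there are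
exactly `v_p(j)` such positions, so `v_p(j) + v_p(C(i, j)) ≤ log_p i ≤ log_p n = v_p(lcm(1, …, n))`.
-/

open Finset

namespace Nat

theorem factorization_add_factorization_choose_le_log {p n k : ℕ} (hp : p.Prime) (hkn : k ≤ n) :
    k.factorization p + (choose n k).factorization p ≤ log p n := by
  rcases eq_or_ne k 0 with rfl | hk0
  · simp
  have hcarry_disjoint : Disjoint {t ∈ Ico 1 (log p n + 1) | p ^ t ∣ k}
      {t ∈ Ico 1 (log p n + 1) | p ^ t ≤ k % p ^ t + (n - k) % p ^ t} := by
    simp +contextual [Finset.disjoint_left, dvd_iff_mod_eq_zero, Nat.mod_lt _ (pow_pos hp.pos _)]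
  have hk_lt : k < p ^ (log p n + 1) := hkn.trans_lt (lt_pow_succ_log_self hp.one_lt n)
  rw [factorization_eq_card_pow_dvd_of_lt hp (pos_of_ne_zero hk0) hk_lt,
    factorization_choose hp hkn (lt_add_one _), ← card_union_of_disjoint hcarry_disjoint,
    filter_union_right]
  exact (card_filter_le _ _).trans_eq (card_Ico _ _)

end Nat

theorem lcmUpTo_eq_lcmUpto (n : ℕ) : lcmUpTo n = Nat.lcmUpto n := rfl

/-- For natural numbers `1 ≤ j ≤ i ≤ n`, the integer `j * C(i, j)`
divides `lcm(1, ..., n)`. -/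
theorem binom_div_lcm (i j n : ℕ) (h1 : 1 ≤ j) (h2 : j ≤ i) (h3 : i ≤ n) :
    (j * i.choose j) ∣ lcmUpTo n := by
  have hchoose : i.choose j ≠ 0 := (Nat.choose_pos h2).ne'
  rw [lcmUpTo_eq_lcmUpto, ← Nat.factorization_prime_le_iff_dvd (by positivity)
    (Nat.lcmUpto_ne_zero n)]
  intro p hp
  rw [Nat.factorization_mul (by omega) hchoose, Nat.factorization_lcmUpto n hp]
  exact (Nat.factorization_add_factorization_choose_le_log hp h2).trans
    (Nat.log_mono_right h3)
end

section
/- For every natural number n, the rational number 2·ℓ_n³·b_n is an integer, where b_n = a_n·z_n + ∑_{k=1}^n ∑_{m=1}^k (-1)^{m+1}·C(n,k)²·C(n+k,k)² / (2·m³·C(n,m)·C(n+m,m)). -/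
/-- `z n = ∑_{m=1}^n 1/m³`. -/
def zseq (n : ℕ) : ℚ := ∑ m ∈ Finset.Icc 1 n, 1 / (m : ℚ) ^ 3

/-- `a n = ∑_{k=0}^n C(n,k)² C(n+k,k)²`. -/
def aseq (n : ℕ) : ℚ :=
  ∑ k ∈ Finset.range (n + 1), (n.choose k : ℚ) ^ 2 * ((n + k).choose k : ℚ) ^ 2

/-- `b n = a n * z n + ∑_{k=1}^n ∑_{m=1}^k (-1)^{m+1} C(n,k)² C(n+k,k)²
      / (2 m³ C(n,m) C(n+m,m))`. -/
def bseq (n : ℕ) : ℚ :=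
  aseq n * zseq n +
    ∑ k ∈ Finset.Icc 1 n, ∑ m ∈ Finset.Icc 1 k,
      (-1 : ℚ) ^ (m + 1) * (n.choose k : ℚ) ^ 2 * ((n + k).choose k : ℚ) ^ 2 /
        (2 * (m : ℚ) ^ 3 * (n.choose m : ℚ) * ((n + m).choose m : ℚ))

/-!
Multiplying out, `2 ℓ_n³ b_n` is `a_n · ∑_{m ≤ n} 2 (ℓ_n / m)³` plus signed terms
`ℓ_n³ C(n,k)² C(n+k,k)² / (m³ C(n,m) C(n+m,m))` with `1 ≤ m ≤ k ≤ n`, so it suffices that each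
of these terms is an integer. Multiplying numerator and denominator by `C(k,m)²`, such a term is
the product of the integers `(ℓ_n / (m C(k,m)))²`, `ℓ_n / m`, `C(n,k) C(k,m) / C(n,m)`,
`C(n+k,k) C(k,m) / C(n+m,m)` and `C(n,k) C(n+k,k)`. The two ratios of binomial coefficients are
integers by the trinomial revision `C(a,b) C(b,c) = C(a,c) C(a-c,b-c)`, and `m C(k,m) ∣ ℓ_k`
follows from Kummer's theorem: the carries in the base-`p` addition `m + (k - m)` all occur in
positions `i` with `v_p(m) < i ≤ log_p k`.
-/

open Finset

namespace Nat

theorem factorization_choose_add_factorization_le_log {p k m : ℕ} (hp : p.Prime) (hmk : m ≤ k) :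
    (k.choose m).factorization p + m.factorization p ≤ log p k := by
  rcases eq_or_ne m 0 with rfl | hm
  · simp
  have hdisj : Disjoint {i ∈ Ico 1 (log p k + 1) | p ^ i ≤ m % p ^ i + (k - m) % p ^ i}
      {i ∈ Ico 1 (log p k + 1) | p ^ i ∣ m} := by
    simp +contextual [disjoint_right, dvd_iff_mod_eq_zero, Nat.mod_lt _ (pow_pos hp.pos _)]
  rw [factorization_choose hp hmk (lt_add_one _),
    factorization_eq_card_pow_dvd_of_lt hp (pos_of_ne_zero hm)
      (hmk.trans_lt (lt_pow_succ_log_self hp.one_lt k)),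
    ← card_union_of_disjoint hdisj, filter_union_right]
  exact (card_filter_le _ _).trans (by simp)

theorem mul_choose_dvd_lcmUpto {k m : ℕ} (hm : m ≠ 0) (hmk : m ≤ k) :
    m * k.choose m ∣ lcmUpto k := by
  have hchoose : k.choose m ≠ 0 := (choose_pos hmk).ne'
  rw [← factorization_le_iff_dvd (mul_ne_zero hm hchoose) (lcmUpto_ne_zero k)]
  intro p
  by_cases hp : p.Prime
  · rw [factorization_mul hm hchoose, factorization_lcmUpto k hp, Finsupp.add_apply, add_comm]
    exact factorization_choose_add_factorization_le_log hp hmk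
  · simp [factorization_eq_zero_of_not_prime _ hp]

theorem dvd_lcmUpto {m n : ℕ} (hm : m ∈ Icc 1 n) : m ∣ lcmUpto n :=
  Finset.dvd_lcm (f := id) hm

theorem lcmUpto_dvd_lcmUpto {k n : ℕ} (hkn : k ≤ n) : lcmUpto k ∣ lcmUpto n :=
  lcm_mono (Icc_subset_Icc_right hkn)

theorem choose_dvd_choose_mul_choose {n k m : ℕ} (hmk : m ≤ k) :
    n.choose m ∣ n.choose k * k.choose m :=
  ⟨_, choose_mul hmk⟩

theorem add_choose_dvd_add_choose_mul_choose (n k m : ℕ) :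
    (n + m).choose m ∣ (n + k).choose k * k.choose m := by
  have h := choose_mul (n := n + k) (k := n + m) (s := n) (by omega)
  rw [add_tsub_cancel_left, add_tsub_cancel_left, choose_symm_add, choose_symm_add] at h
  exact ⟨(n + k).choose (n + m), by rw [← h, mul_comm]⟩

theorem pow_three_mul_choose_mul_add_choose_dvd {n k m : ℕ} (hm : m ≠ 0) (hmk : m ≤ k)
    (hkn : k ≤ n) :
    m ^ 3 * n.choose m * (n + m).choose m ∣
      lcmUpto n ^ 3 * n.choose k ^ 2 * (n + k).choose k ^ 2 := by
  have hmc : m * k.choose m ∣ lcmUpto n :=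
    (mul_choose_dvd_lcmUpto hm hmk).trans (lcmUpto_dvd_lcmUpto hkn)
  have hm' : m ∣ lcmUpto n := (dvd_mul_right m _).trans hmc
  refine (Nat.mul_dvd_mul_iff_right (pow_pos (choose_pos hmk) 2)).1 ?_
  calc m ^ 3 * n.choose m * (n + m).choose m * k.choose m ^ 2
      = (m * k.choose m) ^ 2 * m * (n.choose m * (n + m).choose m) := by ring
    _ ∣ lcmUpto n ^ 2 * lcmUpto n *
          (n.choose k * k.choose m * ((n + k).choose k * k.choose m)) :=
        mul_dvd_mul (mul_dvd_mul (pow_dvd_pow_of_dvd hmc 2) hm')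
          (mul_dvd_mul (choose_dvd_choose_mul_choose hmk)
            (add_choose_dvd_add_choose_mul_choose n k m))
    _ ∣ lcmUpto n ^ 3 * n.choose k ^ 2 * (n + k).choose k ^ 2 * k.choose m ^ 2 :=
        ⟨n.choose k * (n + k).choose k, by ring⟩

end Nat

theorem aseq_mem_range_intCast (n : ℕ) : aseq n ∈ (Int.castRingHom ℚ).range :=
  ⟨∑ k ∈ range (n + 1), (n.choose k : ℤ) ^ 2 * ((n + k).choose k : ℤ) ^ 2, by simp [aseq]⟩

theorem two_mul_lcmUpto_pow_three_mul_zseq_mem_range_intCast (n : ℕ) :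
    2 * (Nat.lcmUpto n : ℚ) ^ 3 * zseq n ∈ (Int.castRingHom ℚ).range := by
  rw [zseq, mul_sum]
  refine sum_mem fun m hm => ⟨2 * ((Nat.lcmUpto n / m : ℕ) : ℤ) ^ 3, ?_⟩
  have hm0 : (m : ℚ) ≠ 0 := Nat.cast_ne_zero.2 (by simp at hm; omega)
  rw [eq_intCast, Int.cast_mul, Int.cast_pow, Int.cast_natCast,
    Nat.cast_div (Nat.dvd_lcmUpto hm) hm0]
  push_cast
  field_simp

theorem two_mul_lcmUpto_pow_three_mul_term_mem_range_intCast {n k m : ℕ} (hm : m ∈ Icc 1 k)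
    (hkn : k ≤ n) :
    2 * (Nat.lcmUpto n : ℚ) ^ 3 *
        ((-1 : ℚ) ^ (m + 1) * (n.choose k : ℚ) ^ 2 * ((n + k).choose k : ℚ) ^ 2 /
          (2 * (m : ℚ) ^ 3 * (n.choose m : ℚ) * ((n + m).choose m : ℚ))) ∈
      (Int.castRingHom ℚ).range := by
  obtain ⟨hm1, hmk⟩ := mem_Icc.1 hm
  have hdvd := Nat.pow_three_mul_choose_mul_add_choose_dvd (by omega) hmk hkn
  have hden : ((m ^ 3 * n.choose m * (n + m).choose m : ℕ) : ℚ) ≠ 0 := by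
    have := Nat.choose_pos (hmk.trans hkn)
    have := Nat.choose_pos (Nat.le_add_left m n)
    positivity
  refine ⟨(-1) ^ (m + 1) * (Nat.lcmUpto n ^ 3 * n.choose k ^ 2 * (n + k).choose k ^ 2 /
    (m ^ 3 * n.choose m * (n + m).choose m) : ℕ), ?_⟩
  rw [eq_intCast, Int.cast_mul, Int.cast_natCast, Nat.cast_div hdvd hden]
  push_cast at hden ⊢
  field_simp

/-- For every natural number `n`, the rational number `2 * ℓ_n ^ 3 * b n` is an
integer. -/
theorem two_lcm_cubed_mul_b_int (n : ℕ) :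
    ∃ m : ℤ, 2 * (lcmUpTo n : ℚ) ^ 3 * bseq n = (m : ℚ) := by
  rw [lcmUpTo_eq_lcmUpto]
  suffices h : 2 * (Nat.lcmUpto n : ℚ) ^ 3 * bseq n ∈ (Int.castRingHom ℚ).range by
    obtain ⟨m, hm⟩ := h
    exact ⟨m, hm.symm⟩
  rw [bseq, mul_add, mul_left_comm, mul_sum]
  refine add_mem (mul_mem (aseq_mem_range_intCast n)
    (two_mul_lcmUpto_pow_three_mul_zseq_mem_range_intCast n)) (sum_mem fun k hk => ?_)
  rw [mul_sum]
  exact sum_mem fun m hm =>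
    two_mul_lcmUpto_pow_three_mul_term_mem_range_intCast hm (mem_Icc.1 hk).2
end

section
/- For every integer n ≥ 1 and every integer k, U_{n,k} − U_{n,k−1} = (n+1)³·λ_{n+1,k} − (34n³+51n²+27n+5)·λ_{n,k} + n³·λ_{n−1,k}, where λ_{n,k} = C(n,k)²·C(n+k,k)² for 0 ≤ k ≤ n and λ_{n,k} = 0 otherwise, and U_{n,k} = 4·(2n+1)·(k·(2k+1) − (2n+1)²)·λ_{n,k}. -/
/-- `lam n k = C(n,k)² C(n+k,k)²` for `0 ≤ k ≤ n`, and `0` otherwise. -/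
def lam (n k : ℤ) : ℤ :=
  if 0 ≤ k ∧ k ≤ n then
    (n.toNat.choose k.toNat : ℤ) ^ 2 * ((n + k).toNat.choose k.toNat : ℤ) ^ 2
  else 0

/-- `U n k = 4 (2n+1) (k (2k+1) − (2n+1)²) λ_{n,k}`. -/
def Useq (n k : ℤ) : ℤ :=
  4 * (2 * n + 1) * (k * (2 * k + 1) - (2 * n + 1) ^ 2) * lam n k

/-!
The ratios `λ_{n+1,k} / λ_{n,k}` and `λ_{n,k-1} / λ_{n+1,k}` are rational functions of `n` and `k`,
and for `k ≥ 0`, `n ≥ 1` every term of the identity is such a rational multiple of `λ_{n+1,k}`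
with denominator dividing `((n+k)(n+k+1))²`. Clearing this denominator reduces the identity to a
polynomial identity, and the two ratio relations hold in cleared form for every integer `k`
(both sides vanish off the support of `λ`), so beyond the trivial range `k < 0` no case split
on the support of `λ` is needed.
-/

def aperyTerm (n k : ℕ) : ℕ := n.choose k * (n + k).choose k

lemma aperyTerm_succ_left_mul (m k : ℕ) :
    (aperyTerm (m + 1) k : ℤ) * (m + 1 - k) = aperyTerm m k * (m + k + 1) := by
  rcases le_or_gt k (m + 1) with hk | hk
  · have top := Nat.choose_mul_succ_eq m k
    have bottom := Nat.choose_mul_succ_eq (m + k) k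
    rw [show m + k + 1 - k = m + 1 by omega, show m + k + 1 = m + 1 + k by omega] at bottom
    zify [hk] at top bottom
    refine mul_right_cancel₀ (b := (m + 1 : ℤ)) (by positivity) ?_
    simp only [aperyTerm, Nat.cast_mul]
    linear_combination (-(m + 1 + k).choose k * (m + 1) : ℤ) * top
      - (m.choose k * (m + 1) : ℤ) * bottom
  · simp [aperyTerm, Nat.choose_eq_zero_of_lt hk, Nat.choose_eq_zero_of_lt (show m < k by omega)]

lemma aperyTerm_succ_succ_mul (m k : ℕ) :
    (aperyTerm (m + 1) (k + 1) : ℤ) * (k + 1) ^ 2 =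
      aperyTerm m k * ((m + k + 1) * (m + k + 2)) := by
  have top := Nat.add_one_mul_choose_eq m k
  have bottom := Nat.add_one_mul_choose_eq (m + k + 1) k
  have middle := Nat.choose_mul_succ_eq (m + k) k
  rw [show m + k + 1 + 1 = m + 1 + (k + 1) by omega] at bottom
  rw [show m + k + 1 - k = m + 1 by omega] at middle
  zify at top bottom middle
  refine mul_right_cancel₀ (b := (m + 1 : ℤ)) (by positivity) ?_
  simp only [aperyTerm, Nat.cast_mul]
  linear_combination (-(m + 1 + (k + 1)).choose (k + 1) * (k + 1) * (m + 1) : ℤ) * top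
    - ((m + 1) ^ 2 * m.choose k : ℤ) * bottom
    - ((m + 1) * m.choose k * (m + k + 2) : ℤ) * middle

lemma lam_of_lt_zero {n k : ℤ} (hk : k < 0) : lam n k = 0 :=
  if_neg (by omega)

lemma lam_natCast (n k : ℕ) : lam n k = (aperyTerm n k : ℤ) ^ 2 := by
  unfold lam aperyTerm
  split_ifs with h
  · simp only [Int.toNat_natCast, ← Nat.cast_add, Nat.cast_mul, mul_pow]
  · simp [Nat.choose_eq_zero_of_lt (show n < k by omega)]

lemma lam_succ_left_mul_sq {n : ℤ} (hn : 0 ≤ n) (k : ℤ) :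
    lam (n + 1) k * (n + 1 - k) ^ 2 = lam n k * (n + k + 1) ^ 2 := by
  rcases lt_or_ge k 0 with hk | hk
  · simp [lam_of_lt_zero hk]
  lift n to ℕ using hn
  lift k to ℕ using hk
  have h := aperyTerm_succ_left_mul n k
  rw [show (n : ℤ) + 1 = ((n + 1 : ℕ) : ℤ) by push_cast; ring, lam_natCast, lam_natCast]
  push_cast
  linear_combination
    ((aperyTerm (n + 1) k : ℤ) * (n + 1 - k) + aperyTerm n k * (n + k + 1)) * h

lemma lam_sub_one_right_mul_sq {n : ℤ} (hn : 0 ≤ n) (k : ℤ) :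
    lam n (k - 1) * ((n + k) * (n + k + 1)) ^ 2 = lam (n + 1) k * k ^ 4 := by
  rcases lt_or_ge k 1 with hk | hk
  · rw [lam_of_lt_zero (by omega : k - 1 < 0), zero_mul]
    rcases (show k ≤ 0 by omega).lt_or_eq with hk | rfl
    · rw [lam_of_lt_zero hk, zero_mul]
    · ring
  lift n to ℕ using hn
  obtain ⟨j, rfl⟩ : ∃ j : ℕ, k = j + 1 := ⟨(k - 1).toNat, by omega⟩
  have h := aperyTerm_succ_succ_mul n j
  rw [add_sub_cancel_right, show (n : ℤ) + 1 = ((n + 1 : ℕ) : ℤ) by push_cast; ring,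
    show (j : ℤ) + 1 = ((j + 1 : ℕ) : ℤ) by push_cast; ring, lam_natCast, lam_natCast]
  push_cast
  linear_combination
    (-(aperyTerm (n + 1) (j + 1) : ℤ) * (j + 1) ^ 2
      - aperyTerm n j * ((n + j + 1) * (n + j + 2))) * h

/-- The telescoping identity certifying Apéry's recurrence for the sequence `a`. -/
theorem U_telescope (n : ℤ) (hn : 1 ≤ n) (k : ℤ) :
    Useq n k - Useq n (k - 1)
      = (n + 1) ^ 3 * lam (n + 1) k
        - (34 * n ^ 3 + 51 * n ^ 2 + 27 * n + 5) * lam n k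
        + n ^ 3 * lam (n - 1) k := by
  rcases lt_or_ge k 0 with hk | hk
  · simp only [Useq, lam_of_lt_zero hk, lam_of_lt_zero (show k - 1 < 0 by omega)]
    ring
  have hup := lam_succ_left_mul_sq (by omega : 0 ≤ n) k
  have hdown := lam_succ_left_mul_sq (by omega : 0 ≤ n - 1) k
  rw [sub_add_cancel] at hdown
  have hleft := lam_sub_one_right_mul_sq (by omega : 0 ≤ n) k
  refine mul_left_cancel₀ (by positivity : ((n + k) * (n + k + 1)) ^ 2 ≠ 0) ?_
  unfold Useq
  linear_combination
    (-4 * (2 * n + 1) * ((k - 1) * (2 * k - 1) - (2 * n + 1) ^ 2)) * hleft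
    + n ^ 3 * (n + k + 1) ^ 2 * hdown
    - ((n + k) ^ 2 * (4 * (2 * n + 1) * (k * (2 * k + 1) - (2 * n + 1) ^ 2)
        + 34 * n ^ 3 + 51 * n ^ 2 + 27 * n + 5) - n ^ 3 * (n - k) ^ 2) * hup
end

section
/- For every natural number n ≥ 2, the Casoratian w_n = b_{n+1}·a_n − a_{n+1}·b_n equals 6/(n+1)³. -/
/-! Both `aseq n` and `bseq n` have the shape `∑ₖ ν n k` with `ν n k = c(n,k)² μ(n,k)`, where
`c(n,k) = C(n,k) C(n+k,k)` and `μ = 1`, resp. `μ` = Apéry's partial sums `aperyPartialSum`.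
The only facts about `ν` that matter are two first-order relations, one in `n` and one in `k`
(`IsAperyFamily`); from them, creative telescoping with an explicit certificate shows that
`∑ₖ ν n k` satisfies Apéry's recurrence
`(n+2)³ u(n+2) - (2n+3)(17n²+51n+39) u(n+1) + (n+1)³ u(n) = 0`.
For two solutions `u`, `v` of this recurrence `(n+1)³ (v(n+1) u(n) - u(n+1) v(n))` is constant,
and for `a`, `b` its value at `n = 0` is `6`. -/

open Finset

def aperyCoeff (n k : ℕ) : ℚ := n.choose k * (n + k).choose k

lemma aperyCoeff_zero_right (n : ℕ) : aperyCoeff n 0 = 1 := by simp [aperyCoeff]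

lemma aperyCoeff_ne_zero {n k : ℕ} (h : k ≤ n) : aperyCoeff n k ≠ 0 := by
  have := Nat.choose_pos h
  have := Nat.choose_pos (Nat.le_add_left k n)
  unfold aperyCoeff
  positivity

lemma aperyCoeff_eq_zero {n k : ℕ} (h : n < k) : aperyCoeff n k = 0 := by
  simp [aperyCoeff, Nat.choose_eq_zero_of_lt h]

lemma aperyCoeff_eq_succ_left (n k : ℕ) :
    aperyCoeff n k = aperyCoeff (n + 1) k * ((n + 1 - k) / (n + k + 1)) := by
  rcases lt_or_ge (n + 1) k with h | h
  · rw [aperyCoeff_eq_zero (by omega), aperyCoeff_eq_zero h, zero_mul]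
  have h₁ : (n.choose k : ℚ) * (n + 1) = (n + 1).choose k * (n + 1 - k) := by
    exact_mod_cast Nat.choose_mul_succ_eq n k
  have h₂ : ((n + k).choose k : ℚ) * (n + k + 1) = (n + k + 1).choose k * (n + 1) := by
    have := Nat.choose_mul_succ_eq (n + k) k
    rw [show n + k + 1 - k = n + 1 by omega] at this
    exact_mod_cast this
  unfold aperyCoeff
  rw [add_right_comm n 1 k, mul_div_assoc', eq_div_iff (by positivity)]
  linear_combination ((n + k + 1).choose k : ℚ) * h₁ + (n.choose k : ℚ) * h₂

lemma aperyCoeff_succ_right (n k : ℕ) :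
    aperyCoeff n (k + 1) = aperyCoeff n k * ((n - k) * (n + k + 1) / (k + 1) ^ 2) := by
  rcases lt_or_ge n k with h | h
  · rw [aperyCoeff_eq_zero (by omega), aperyCoeff_eq_zero h, zero_mul]
  have h₁ : (n.choose (k + 1) : ℚ) * (k + 1) = n.choose k * (n - k) := by
    exact_mod_cast Nat.choose_succ_right_eq n k
  have h₂ : ((n + k + 1).choose (k + 1) : ℚ) * (k + 1) = (n + k + 1) * (n + k).choose k := by
    exact_mod_cast (Nat.add_one_mul_choose_eq (n + k) k).symm
  unfold aperyCoeff
  rw [← add_assoc, mul_div_assoc', eq_div_iff (by positivity)]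
  linear_combination ((n + k + 1).choose (k + 1) * (k + 1) : ℚ) * h₁ +
    (n.choose k * (n - k) : ℚ) * h₂

def aperyPartialSum (n k : ℕ) : ℚ :=
  zseq n + ∑ m ∈ Icc 1 k, (-1) ^ (m + 1) / (2 * (m : ℚ) ^ 3 * aperyCoeff n m)

lemma zseq_succ (n : ℕ) : zseq (n + 1) = zseq n + 1 / ((n : ℚ) + 1) ^ 3 := by
  rw [zseq, sum_Icc_succ_top (by omega), ← zseq]
  push_cast
  ring

lemma aperyPartialSum_zero_right (n : ℕ) : aperyPartialSum n 0 = zseq n := by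
  simp [aperyPartialSum]

lemma aperyPartialSum_succ_right (n k : ℕ) :
    aperyPartialSum n (k + 1) =
      aperyPartialSum n k + (-1) ^ k / (2 * ((k : ℚ) + 1) ^ 3 * aperyCoeff n (k + 1)) := by
  rw [aperyPartialSum, sum_Icc_succ_top (by omega), ← add_assoc, ← aperyPartialSum]
  push_cast
  ring

lemma aperyPartialSum_succ_left_sub {n k : ℕ} (hk : k ≤ n) :
    aperyPartialSum (n + 1) k - aperyPartialSum n k =
      (-1) ^ k / (((n : ℚ) + 1) ^ 2 * (n + k + 1) * aperyCoeff n k) := by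
  induction k with
  | zero =>
    rw [aperyPartialSum_zero_right, aperyPartialSum_zero_right, aperyCoeff_zero_right, zseq_succ]
    ring
  | succ j ih =>
    have hj : (j : ℚ) < n := by exact_mod_cast hk
    have hc : aperyCoeff (n + 1) j ≠ 0 := aperyCoeff_ne_zero (by omega)
    rw [aperyPartialSum_succ_right, aperyPartialSum_succ_right, add_sub_add_comm, ih (by omega),
      aperyCoeff_succ_right, aperyCoeff_eq_succ_left n (j + 1), aperyCoeff_succ_right,
      aperyCoeff_eq_succ_left n j]
    push_cast [pow_succ]
    have : (n : ℚ) + 1 - j ≠ 0 := by linarith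
    have : (n : ℚ) + 1 - (j + 1) ≠ 0 := by linarith
    field_simp
    ring

/-- `ν n k` stands for `c(n,k)² μ(n,k)`; the relations are stated for this product, with the
ratios `c(n,k) / c(n+1,k)` and `c(n,k+1) / c(n,k)` written out, so that they hold for all `k`,
also where `c(n,k) = 0`. -/
structure IsAperyFamily (ε : ℚ) (ν : ℕ → ℕ → ℚ) : Prop where
  eq_succ_left (n k : ℕ) : ν n k = ((n + 1 - k) / (n + k + 1)) ^ 2 * ν (n + 1) k -
    ε * (-1) ^ k * aperyCoeff n k / (((n : ℚ) + 1) ^ 2 * (n + k + 1))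
  succ_right (n k : ℕ) : ν n (k + 1) = ((n - k) * (n + k + 1) / (k + 1) ^ 2) ^ 2 * ν n k +
    ε * (-1) ^ k * aperyCoeff n (k + 1) / (2 * ((k : ℚ) + 1) ^ 3)

lemma isAperyFamily_sq : IsAperyFamily 0 fun n k ↦ aperyCoeff n k ^ 2 where
  eq_succ_left n k := by rw [aperyCoeff_eq_succ_left n k]; ring
  succ_right n k := by rw [aperyCoeff_succ_right]; ring

lemma isAperyFamily_sq_mul_partialSum :
    IsAperyFamily 1 fun n k ↦ aperyCoeff n k ^ 2 * aperyPartialSum n k where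
  eq_succ_left n k := by
    have hc := aperyCoeff_eq_succ_left n k
    set r : ℚ := (n + 1 - k) / (n + k + 1)
    rcases le_or_gt k n with hk | hk
    · have := aperyCoeff_ne_zero hk
      calc _ = aperyCoeff n k ^ 2 * aperyPartialSum (n + 1) k -
            (-1) ^ k * aperyCoeff n k / ((n + 1) ^ 2 * (n + k + 1)) := by
            rw [← sub_add_cancel (aperyPartialSum (n + 1) k) (aperyPartialSum n k),
              aperyPartialSum_succ_left_sub hk]
            field_simp
            ring
        _ = _ := by rw [hc]; ring
    · rw [aperyCoeff_eq_zero hk] at hc ⊢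
      rw [← mul_assoc, ← mul_pow, mul_comm r, ← hc]
      ring
  succ_right n k := by
    have hc := aperyCoeff_succ_right n k
    set σ : ℚ := (n - k) * (n + k + 1) / (k + 1) ^ 2
    rw [aperyPartialSum_succ_right]
    rcases eq_or_ne (aperyCoeff n (k + 1)) 0 with h | h
    · rw [h] at hc ⊢
      rw [← mul_assoc, ← mul_pow, mul_comm σ, ← hc]
      ring
    · calc _ = aperyCoeff n (k + 1) ^ 2 * aperyPartialSum n k +
            (-1) ^ k * aperyCoeff n (k + 1) / (2 * (k + 1) ^ 3) := by
            field_simp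
        _ = _ := by rw [hc]; ring

def aperySum (ν : ℕ → ℕ → ℚ) (n : ℕ) : ℚ := ∑ k ∈ range (n + 1), ν n k

def aperyPoly (m : ℕ) : ℚ := (2 * m + 3) * (17 * m ^ 2 + 51 * m + 39)

def aperyRecTerm (ν : ℕ → ℕ → ℚ) (m k : ℕ) : ℚ :=
  ((m : ℚ) + 2) ^ 3 * ν (m + 2) k - aperyPoly m * ν (m + 1) k + ((m : ℚ) + 1) ^ 3 * ν m k

/-- Creative-telescoping certificate for `aperyRecTerm` (as produced by Zeilberger's algorithm);
the `ε`-part absorbs the inhomogeneous terms of `IsAperyFamily`. -/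
def aperyCert (ε : ℚ) (ν : ℕ → ℕ → ℚ) (m k : ℕ) : ℚ :=
  4 * (2 * m + 3) * (k * (2 * k + 1) - (2 * m + 3) ^ 2) * ν (m + 1) k -
    ε * 5 * (2 * m + 3) * (-1) ^ k * k / ((m + 1) * (m + 2)) * aperyCoeff (m + 1) k

namespace IsAperyFamily

variable {ε : ℚ} {ν : ℕ → ℕ → ℚ}

lemma eq_zero_of_lt (hν : IsAperyFamily ε ν) {n k : ℕ} (h : n < k) : ν n k = 0 := by
  induction k, h using Nat.le_induction with
  | base => simp [hν.succ_right n n, aperyCoeff_eq_zero (Nat.lt_succ_self n)]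
  | succ k hk ih => simp [hν.succ_right n k, ih, aperyCoeff_eq_zero (Nat.lt_succ_of_lt hk)]

lemma sum_range_eq_aperySum (hν : IsAperyFamily ε ν) {n N : ℕ} (h : n ≤ N) :
    ∑ k ∈ range (N + 1), ν n k = aperySum ν n := by
  refine (sum_subset (range_subset_range.2 (by omega)) fun k _ hk ↦ ?_).symm
  exact hν.eq_zero_of_lt (by simpa using hk)

lemma aperyRecTerm_zero (hν : IsAperyFamily ε ν) (m : ℕ) :
    aperyRecTerm ν m 0 = aperyCert ε ν m 0 := by
  rw [aperyRecTerm, aperyCert, aperyPoly, hν.eq_succ_left m 0, hν.eq_succ_left (m + 1) 0,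
    aperyCoeff_zero_right, aperyCoeff_zero_right]
  push_cast
  field_simp
  ring

lemma aperyRecTerm_succ (hν : IsAperyFamily ε ν) (m j : ℕ) :
    aperyRecTerm ν m (j + 1) = aperyCert ε ν m (j + 1) - aperyCert ε ν m j := by
  rw [aperyRecTerm, aperyCert, aperyCert, aperyPoly, hν.eq_succ_left m (j + 1),
    hν.eq_succ_left (m + 1) (j + 1), hν.succ_right (m + 1 + 1) j, hν.eq_succ_left (m + 1) j,
    aperyCoeff_eq_succ_left m (j + 1), aperyCoeff_eq_succ_left (m + 1) (j + 1),
    aperyCoeff_succ_right (m + 1 + 1) j, aperyCoeff_eq_succ_left (m + 1) j]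
  push_cast [pow_succ]
  field_simp
  ring

lemma aperyCert_eq_zero (hν : IsAperyFamily ε ν) (m : ℕ) : aperyCert ε ν m (m + 2) = 0 := by
  simp [aperyCert, hν.eq_zero_of_lt (by omega : m + 1 < m + 2), aperyCoeff_eq_zero]

lemma sum_aperyRecTerm (hν : IsAperyFamily ε ν) (m : ℕ) :
    ∑ k ∈ range (m + 2 + 1), aperyRecTerm ν m k = 0 := by
  rw [sum_range_succ']
  simp only [hν.aperyRecTerm_succ, sum_range_sub, hν.aperyRecTerm_zero, hν.aperyCert_eq_zero]
  ring

theorem recurrence (hν : IsAperyFamily ε ν) (m : ℕ) :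
    ((m : ℚ) + 2) ^ 3 * aperySum ν (m + 2) - aperyPoly m * aperySum ν (m + 1) +
      ((m : ℚ) + 1) ^ 3 * aperySum ν m = 0 := by
  rw [aperySum, ← hν.sum_range_eq_aperySum (by omega : m + 1 ≤ m + 2),
    ← hν.sum_range_eq_aperySum (by omega : m ≤ m + 2), mul_sum, mul_sum, mul_sum,
    ← sum_sub_distrib, ← sum_add_distrib]
  exact hν.sum_aperyRecTerm m

end IsAperyFamily

theorem cube_mul_casoratian_eq {R : Type*} [CommRing R] (q u v : ℕ → R)
    (hu : ∀ n : ℕ, ((n : R) + 2) ^ 3 * u (n + 2) - q n * u (n + 1) + ((n : R) + 1) ^ 3 * u n = 0)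
    (hv : ∀ n : ℕ, ((n : R) + 2) ^ 3 * v (n + 2) - q n * v (n + 1) + ((n : R) + 1) ^ 3 * v n = 0)
    (n : ℕ) :
    ((n : R) + 1) ^ 3 * (v (n + 1) * u n - u (n + 1) * v n) = v 1 * u 0 - u 1 * v 0 := by
  induction n with
  | zero => simp
  | succ n ih =>
    rw [← ih]
    push_cast
    linear_combination u (n + 1) * hv n - v (n + 1) * hu n

lemma aseq_eq_aperySum (n : ℕ) : aseq n = aperySum (fun n k ↦ aperyCoeff n k ^ 2) n := by
  simp only [aseq, aperySum, aperyCoeff, mul_pow]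

lemma bseq_eq_aperySum (n : ℕ) :
    bseq n = aperySum (fun n k ↦ aperyCoeff n k ^ 2 * aperyPartialSum n k) n := by
  have htail : ∑ k ∈ Icc 1 n, ∑ m ∈ Icc 1 k,
      (-1 : ℚ) ^ (m + 1) * (n.choose k : ℚ) ^ 2 * ((n + k).choose k : ℚ) ^ 2 /
        (2 * (m : ℚ) ^ 3 * (n.choose m : ℚ) * ((n + m).choose m : ℚ)) =
      ∑ k ∈ range (n + 1), aperyCoeff n k ^ 2 *
        ∑ m ∈ Icc 1 k, (-1) ^ (m + 1) / (2 * (m : ℚ) ^ 3 * aperyCoeff n m) := by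
    rw [range_eq_Ico, sum_eq_sum_Ico_succ_bot (by omega), Ico_add_one_right_eq_Icc, zero_add,
      Icc_eq_empty_of_lt zero_lt_one, sum_empty, mul_zero, zero_add]
    refine sum_congr rfl fun k _ ↦ ?_
    rw [mul_sum]
    refine sum_congr rfl fun m _ ↦ ?_
    simp only [aperyCoeff]
    ring
  rw [bseq, htail, aseq_eq_aperySum, aperySum, aperySum, sum_mul, ← sum_add_distrib]
  simp only [aperyPartialSum, mul_add]

theorem casoratian_eq_general (n : ℕ) :
    bseq (n + 1) * aseq n - aseq (n + 1) * bseq n = 6 / ((n : ℚ) + 1) ^ 3 := by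
  have hw := cube_mul_casoratian_eq aperyPoly aseq bseq
    (by simpa only [aseq_eq_aperySum] using isAperyFamily_sq.recurrence)
    (by simpa only [bseq_eq_aperySum] using isAperyFamily_sq_mul_partialSum.recurrence) n
  have hw₀ : bseq 1 * aseq 0 - aseq 1 * bseq 0 = 6 := by
    norm_num [aseq, bseq, zseq, sum_range_succ]
  rw [eq_div_iff (by positivity), mul_comm, hw, hw₀]

/-- For `n ≥ 2`, the Casoratian `w n = b (n+1) * a n - a (n+1) * b n` equals
`6 / (n+1)³`. -/
theorem casoratian_eq (n : ℕ) (hn : 2 ≤ n) :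
    bseq (n + 1) * aseq n - aseq (n + 1) * bseq n = 6 / ((n : ℚ) + 1) ^ 3 :=
  casoratian_eq_general n
end

section
/- The sequence ℓ_n is O(3^n): there is a constant K > 0 such that ℓ_n ≤ K·3^n for all n. -/
open Real Finset Filter Asymptotics Chebyshev
open scoped Nat

namespace Nat

theorem multinomial_mul_prod_pow_le {ι : Type*} [Fintype ι] [DecidableEq ι] (f : ι → ℕ) :
    multinomial univ f * ∏ i, f i ^ f i ≤ (∑ i, f i) ^ ∑ i, f i := by
  rw [sum_pow_eq_sum_piAntidiag]
  exact single_le_sum (f := fun k => (multinomial univ k : ℕ) * ∏ i, f i ^ k i)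
    (fun _ _ => Nat.zero_le _) (by simp)

theorem Prime.dvd_multinomial_of_sum_div_lt {ι : Type*} {s : Finset ι} {f : ι → ℕ} {p : ℕ}
    (hp : p.Prime) (h : ∑ i ∈ s, f i / p < (∑ i ∈ s, f i) / p) : p ∣ multinomial s f := by
  set n := ∑ i ∈ s, f i
  have hn : n ≠ 0 := fun hn => by simp [hn] at h
  have hlog : ∀ k ≤ n, log p k < n + 1 := fun k hk => (log_le_self p k).trans_lt (by omega)
  have sum_div_le : ∀ j, ∑ i ∈ s, f i / p ^ j ≤ n / p ^ j := fun j =>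
    (Nat.le_div_iff_mul_le (pow_pos hp.pos j)).2 <| by
      rw [sum_mul]; exact sum_le_sum fun i _ => Nat.div_mul_le_self _ _
  suffices (∏ i ∈ s, (f i)!).factorization p < (n !).factorization p by
    rw [← multinomial_spec, factorization_mul (by positivity) (multinomial_pos s f).ne',
      Finsupp.add_apply] at this
    exact (hp.dvd_iff_one_le_factorization (multinomial_pos s f).ne').2 (by omega)
  rw [factorization_prod fun i _ => factorial_ne_zero _, Finsupp.finsetSum_apply,
    factorization_factorial hp (hlog n le_rfl)]
  calc ∑ i ∈ s, (f i)!.factorization p = ∑ i ∈ s, ∑ j ∈ Ico 1 (n + 1), f i / p ^ j :=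
        sum_congr rfl fun i hi =>
          factorization_factorial hp (hlog _ (single_le_sum (fun _ _ => Nat.zero_le _) hi))
    _ = ∑ j ∈ Ico 1 (n + 1), ∑ i ∈ s, f i / p ^ j := sum_comm
    _ < ∑ j ∈ Ico 1 (n + 1), n / p ^ j :=
        sum_lt_sum (fun j _ => sum_div_le j) ⟨1, by simp; omega, by simpa using h⟩

end Nat

theorem primorial_dvd_primorial_mul {m n M : ℕ} (h : ∀ p, p.Prime → m < p → p ≤ n → p ∣ M) :
    primorial n ∣ primorial m * M :=
  prod_primes_dvd _ (fun p hp => (mem_filter.1 hp).2.prime) fun p hp => by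
    obtain ⟨hpn, hp⟩ := mem_filter.1 hp
    rcases le_or_gt p m with hpm | hpm
    · exact dvd_mul_of_dvd_left
        (dvd_prod_of_mem _ (mem_filter.2 ⟨mem_range.2 (by omega), hp⟩)) _
    · exact dvd_mul_of_dvd_right (h p hp hpm (by simpa [Nat.lt_succ_iff] using hpn)) _

theorem Real.log_multinomial_le {ι : Type*} [Fintype ι] [DecidableEq ι] (f : ι → ℕ) :
    log (Nat.multinomial univ f) ≤ ∑ i, f i * log ((∑ j, f j : ℕ) / f i) := by
  set N := ∑ j, f j
  have hpow : ∀ k : ℕ, (0 : ℝ) < (k : ℝ) ^ k := fun k => by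
    rcases k with _ | k <;> positivity
  have key : (Nat.multinomial univ f : ℝ) * ∏ i, (f i : ℝ) ^ f i ≤ (N : ℝ) ^ N := by
    exact_mod_cast Nat.multinomial_mul_prod_pow_le f
  have hprod : (0 : ℝ) < ∏ i, (f i : ℝ) ^ f i := prod_pos fun i _ => hpow (f i)
  have hM : (0 : ℝ) < Nat.multinomial univ f := by exact_mod_cast Nat.multinomial_pos _ _
  have hlog := log_le_log (by positivity) key
  rw [log_mul hM.ne' hprod.ne', log_prod fun i _ => (hpow (f i)).ne', log_pow] at hlog
  have hterm : ∀ i, (f i : ℝ) * log (N / f i) = f i * log N - f i * log (f i) := fun i => by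
    rcases Nat.eq_zero_or_pos (f i) with h | h
    · simp [h]
    · have : 0 < N := h.trans_le (single_le_sum (fun _ _ => Nat.zero_le _) (mem_univ i))
      rw [log_div (by positivity) (by positivity)]; ring
  simp only [hterm, sum_sub_distrib, ← sum_mul, log_pow] at hlog ⊢
  push_cast [N] at hlog ⊢
  linarith

theorem Real.mul_log_div_le_div_mul_log_add_one {a f x : ℝ} (ha : 1 ≤ a) (hf : 0 < f)
    (hfx : a * f ≤ x) (hxf : x ≤ a * (f + 1)) : f * log (x / f) ≤ x / a * log a + 1 := by
  have hx : 0 < x / f := div_pos (by nlinarith) hf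
  calc f * log (x / f) ≤ f * log (a * (1 + f⁻¹)) := by
        gcongr
        rw [div_le_iff₀ hf]; field_simp; linarith
    _ = f * log a + f * log (1 + f⁻¹) := by
        rw [log_mul (by positivity) (by positivity)]; ring
    _ ≤ x / a * log a + f * f⁻¹ := by
        gcongr
        · exact log_nonneg ha
        · rw [le_div_iff₀ (by positivity)]; linarith
        · linarith [log_le_sub_one_of_pos (show 0 < 1 + f⁻¹ by positivity)]
    _ = x / a * log a + 1 := by rw [mul_inv_cancel₀ hf.ne']

theorem Real.natDiv_mul_log_div_natDiv_le {n a : ℕ} (ha : 1 ≤ a) (han : a ≤ n) :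
    ((n / a : ℕ) : ℝ) * log (n / (n / a : ℕ)) ≤ n / a * log a + 1 := by
  apply mul_log_div_le_div_mul_log_add_one (by exact_mod_cast ha)
  · exact_mod_cast Nat.div_pos han ha
  · exact_mod_cast Nat.mul_div_le n a
  · exact_mod_cast (Nat.lt_mul_div_succ n ha).le

theorem hanson_constant_le :
    log 2 / 2 + log 3 / 3 + log 7 / 7 + log 43 / 43 + log 7224 / 1806 ≤ log 3 - 1 / 100 := by
  -- `1806 ×` the claim, exponentiated, with `e ^ 18.06 < 2 ^ 27`
  have h := log_le_log (by positivity)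
    (show (2 : ℝ) ^ 930 * 7 ^ 258 * 43 ^ 42 * 7224 ≤ 3 ^ 1204 by
      exact_mod_cast (by decide +kernel : 2 ^ 930 * 7 ^ 258 * 43 ^ 42 * 7224 ≤ 3 ^ 1204))
  rw [log_mul (by positivity) (by positivity), log_mul (by positivity) (by positivity),
    log_mul (by positivity) (by positivity), log_pow, log_pow, log_pow, log_pow] at h
  push_cast at h
  linarith [log_two_gt_d9]

theorem eventually_two_mul_sqrt_mul_log_add_le (C : ℝ) :
    ∀ᶠ x : ℝ in atTop, 2 * √x * log x + C ≤ x / 100 := by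
  have hlog : log =o[atTop] sqrt :=
    (isLittleO_log_rpow_atTop (by norm_num : (0 : ℝ) < 1 / 2)).congr_right
      fun x => (sqrt_eq_rpow x).symm
  have hmain : (fun x => 2 * √x * log x + C) =o[atTop] id := by
    refine IsLittleO.add ?_ (isLittleO_const_id_atTop C)
    refine (((isBigO_refl sqrt atTop).mul_isLittleO hlog).const_mul_left 2).congr' ?_ ?_
    · exact .of_forall fun x => by simp only [mul_assoc]
    · filter_upwards [eventually_ge_atTop 0] with x hx using mul_self_sqrt hx
  filter_upwards [hmain.def (by norm_num : (0 : ℝ) < 1 / 100), eventually_ge_atTop 0]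
    with x hx hx0
  rw [norm_eq_abs, norm_eq_abs, id, abs_of_nonneg hx0] at hx
  linarith [le_abs_self (2 * √x * log x + C)]

def hansonRem (n : ℕ) : ℕ := n - (n / 2 + n / 3 + n / 7 + n / 43)

def hansonParts (n : ℕ) : Fin 5 → ℕ := ![n / 2, n / 3, n / 7, n / 43, hansonRem n]

theorem sum_hansonParts (n : ℕ) : ∑ i, hansonParts n i = n := by
  simp only [Fin.sum_univ_five, hansonParts, Matrix.cons_val, hansonRem]
  omega

theorem prime_dvd_multinomial_hansonParts {n p : ℕ} (hp : p.Prime) (hrem : hansonRem n < p)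
    (hpn : p ≤ n) : p ∣ Nat.multinomial univ (hansonParts n) := by
  refine hp.dvd_multinomial_of_sum_div_lt ?_
  have hm : 0 < n / p := Nat.div_pos hpn hp.pos
  rw [sum_hansonParts, Fin.sum_univ_five]
  have hswap : ∀ a, n / a / p = n / p / a := fun a => by
    rw [Nat.div_div_eq_div_mul, Nat.div_div_eq_div_mul, mul_comm]
  simp only [hansonParts, Matrix.cons_val, hswap, Nat.div_eq_of_lt hrem]
  omega

theorem theta_le_hansonRem_mul_log_four_add_log_multinomial (n : ℕ) :
    θ n ≤ hansonRem n * log 4 + log (Nat.multinomial univ (hansonParts n)) := by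
  have hdvd : primorial n ∣ primorial (hansonRem n) * Nat.multinomial univ (hansonParts n) :=
    primorial_dvd_primorial_mul fun p hp hrem hpn => prime_dvd_multinomial_hansonParts hp hrem hpn
  have hprim : (primorial (hansonRem n) : ℝ) ≤ 4 ^ hansonRem n := by
    exact_mod_cast primorial_le_four_pow _
  have hpos : (0 : ℝ) < primorial (hansonRem n) := by exact_mod_cast primorial_pos _
  have hM : (0 : ℝ) < Nat.multinomial univ (hansonParts n) := by
    exact_mod_cast Nat.multinomial_pos _ _
  calc θ n = log (primorial n) := by rw [theta_eq_log_primorial, Nat.floor_natCast]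
    _ ≤ log (primorial (hansonRem n) * Nat.multinomial univ (hansonParts n)) := by
        gcongr
        · exact_mod_cast primorial_pos n
        · exact_mod_cast
            Nat.le_of_dvd (Nat.mul_pos (primorial_pos _) (Nat.multinomial_pos _ _)) hdvd
    _ ≤ hansonRem n * log 4 + log (Nat.multinomial univ (hansonParts n)) := by
        rw [log_mul hpos.ne' hM.ne']
        gcongr
        calc log (primorial (hansonRem n)) ≤ log (4 ^ hansonRem n) := log_le_log hpos hprim
          _ = _ := log_pow _ _

theorem hansonRem_mul_log_four_add_le {n : ℕ} (hn : 1806 ≤ n) :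
    hansonRem n * log 4 + hansonRem n * log (n / hansonRem n) ≤ (n / 1806 + 4) * log 7224 := by
  set r := hansonRem n
  have hr : n ≤ 1806 * r ∧ 1806 * r ≤ n + 7224 := by simp only [r, hansonRem]; omega
  have hr0 : (0 : ℝ) < r := by exact_mod_cast (show 0 < r by omega)
  have h1 : (n : ℝ) ≤ 1806 * r := by exact_mod_cast hr.1
  have h2 : (1806 * r : ℝ) ≤ n + 7224 := by exact_mod_cast hr.2
  calc r * log 4 + r * log (n / r) = r * log (4 * (n / r)) := by
        rw [log_mul (by norm_num) (by positivity)]; ring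
    _ ≤ r * log 7224 := by
        gcongr
        rw [mul_div_assoc', div_le_iff₀ hr0]; linarith
    _ ≤ (n / 1806 + 4) * log 7224 :=
        mul_le_mul_of_nonneg_right (by linarith) (log_nonneg (by norm_num))

theorem theta_le_log_three_sub_mul_add {n : ℕ} (hn : 1806 ≤ n) :
    θ n ≤ (log 3 - 1 / 100) * n + (4 + 4 * log 7224) := by
  have hθ := theta_le_hansonRem_mul_log_four_add_log_multinomial n
  have hE := log_multinomial_le (hansonParts n)
  rw [sum_hansonParts, Fin.sum_univ_five] at hE
  simp only [hansonParts, Matrix.cons_val] at hE hθ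
  have h2 := natDiv_mul_log_div_natDiv_le (n := n) (a := 2) (by norm_num) (by omega)
  have h3 := natDiv_mul_log_div_natDiv_le (n := n) (a := 3) (by norm_num) (by omega)
  have h7 := natDiv_mul_log_div_natDiv_le (n := n) (a := 7) (by norm_num) (by omega)
  have h43 := natDiv_mul_log_div_natDiv_le (n := n) (a := 43) (by norm_num) (by omega)
  push_cast at h2 h3 h7 h43
  have hc := mul_le_mul_of_nonneg_left hanson_constant_le (Nat.cast_nonneg n : (0 : ℝ) ≤ n)
  linarith [hansonRem_mul_log_four_add_le hn]

theorem eventually_lcmUpTo_le_three_pow : ∀ᶠ n : ℕ in atTop, (lcmUpTo n : ℝ) ≤ 3 ^ n := by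
  filter_upwards [eventually_ge_atTop 1806,
    tendsto_natCast_atTop_atTop.eventually
      (eventually_two_mul_sqrt_mul_log_add_le (4 + 4 * log 7224))]
    with n hn hsmall
  have hψ : log (lcmUpTo n) ≤ θ n + 2 * √n * log n := by
    change log (Nat.lcmUpto n : ℝ) ≤ _
    rw [← psi_eq_log_lcmUpto]
    have hn1 : (1 : ℝ) ≤ n := by exact_mod_cast (show 1 ≤ n by omega)
    linarith [le_abs_self (ψ n - θ n), abs_psi_sub_theta_le_sqrt_mul_log hn1]
  rw [← log_le_log_iff (by exact_mod_cast Nat.lcmUpto_pos n) (by positivity), log_pow]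
  linarith [theta_le_log_three_sub_mul_add hn]

/-- `lcm(1, ..., n) = O(3^n)`: there is a constant `K > 0` such that
`lcm(1, ..., n) ≤ K * 3^n` for all `n`. -/
theorem lcm_bigO_three_pow :
    ∃ K : ℝ, 0 < K ∧ ∀ n : ℕ, (lcmUpTo n : ℝ) ≤ K * 3 ^ n := by
  have hO : (fun n => (lcmUpTo n : ℝ)) =O[atTop] fun n => (3 : ℝ) ^ n :=
    .of_bound 1 <| eventually_lcmUpTo_le_three_pow.mono fun n hn => by
      simpa [abs_of_pos] using hn
  obtain ⟨K, hK, hbound⟩ := bound_of_isBigO_nat_atTop hO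
  exact ⟨K, hK, fun n => by simpa using hbound (by positivity)⟩
end

section
/- For all natural numbers n ≥ 1, k ≥ 1 and every prime p, the p-adic valuation of C(n,k) = n!/(⌊n/α_1⌋!·⌊n/α_2⌋!·...·⌊n/α_k⌋!) is at least ⌊log_p(n)⌋, the greatest natural number α with p^α ≤ n; consequently ℓ_n ≤ C(n,k). -/
/-- Auxiliary: `alphaAux i` is `α_{i+1}`, with `α_1 = 2` and
`α_{i+1} = α_i² - α_i + 1`. -/
def alphaAux : ℕ → ℕ
  | 0 => 2
  | i + 1 => alphaAux i ^ 2 - alphaAux i + 1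

/-- The sequence `α_1 = 2, α_2 = 3, α_3 = 7, α_4 = 43, ...`, indexed from `1`. -/
def alphaSeq (i : ℕ) : ℕ := alphaAux (i - 1)

/-- Hanson's sequence `C(n,k) = n! / (⌊n/α_1⌋! ⌊n/α_2⌋! ⋯ ⌊n/α_k⌋!)`. -/
def hansonC (n k : ℕ) : ℕ :=
  n.factorial / ∏ i ∈ Finset.Icc 1 k, (n / alphaSeq i).factorial

/-!
Since `α_{i+1} - 1 = α_i (α_i - 1)`, the sum `∑_{i ≤ k} 1/α_i` telescopes to
`1 - 1/(α_{k+1} - 1) < 1`, so `∑_i ⌊m/α_i⌋ < m` for every `m ≥ 1`. By Legendre's formula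
`v_p(C(n,k)) = ∑_{j ≥ 1} (⌊n/p^j⌋ - ∑_i ⌊⌊n/p^j⌋/α_i⌋)`, and each of the `⌊log_p n⌋` indices
`j` with `p^j ≤ n` contributes at least one. Every `m ≤ n` has `v_p(m) ≤ ⌊log_p n⌋`, hence
divides `C(n,k)`.
-/

open Finset Nat

section FactorialRatio

variable {ι : Type*} {s : Finset ι} {a : ι → ℕ}

theorem sum_div_lt_self_of_sum_inv_lt_one (h : ∑ i ∈ s, (1 : ℚ) / a i < 1) {m : ℕ}
    (hm : 0 < m) : ∑ i ∈ s, m / a i < m := by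
  have hm' : (0 : ℚ) < m := by exact_mod_cast hm
  suffices (∑ i ∈ s, m / a i : ℕ) < (m : ℚ) by exact_mod_cast this
  calc (∑ i ∈ s, m / a i : ℕ) ≤ ∑ i ∈ s, (m : ℚ) / a i := by
        push_cast
        exact sum_le_sum fun i _ => Nat.cast_div_le
    _ = m * ∑ i ∈ s, (1 : ℚ) / a i := by
        rw [mul_sum]
        exact sum_congr rfl fun i _ => (mul_one_div _ _).symm
    _ < m := mul_lt_of_lt_one_right hm' h

theorem prod_factorial_div_dvd_factorial (h : ∑ i ∈ s, (1 : ℚ) / a i < 1) (n : ℕ) :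
    ∏ i ∈ s, (n / a i)! ∣ n ! := by
  refine (prod_factorial_dvd_factorial_sum _ _).trans (factorial_dvd_factorial ?_)
  rcases n.eq_zero_or_pos with rfl | hn
  · simp
  · exact (sum_div_lt_self_of_sum_inv_lt_one h hn).le

theorem padicValNat_finset_prod {p : ℕ} [Fact p.Prime] {f : ι → ℕ} (hf : ∀ i ∈ s, f i ≠ 0) :
    padicValNat p (∏ i ∈ s, f i) = ∑ i ∈ s, padicValNat p (f i) := by
  classical
  induction s using Finset.induction_on with
  | empty => simp
  | insert j s hj ih =>
    rw [prod_insert hj, sum_insert hj, padicValNat.mul (hf j (mem_insert_self j s))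
      (prod_ne_zero_iff.mpr fun i hi => hf i (mem_insert_of_mem hi)),
      ih fun i hi => hf i (mem_insert_of_mem hi)]

theorem log_add_sum_padicValNat_factorial_div_le {p : ℕ} [hp : Fact p.Prime]
    (h : ∑ i ∈ s, (1 : ℚ) / a i < 1) (n : ℕ) :
    Nat.log p n + ∑ i ∈ s, padicValNat p (n / a i)! ≤ padicValNat p n ! := by
  set b := Nat.log p n + 1
  have legendre_div : ∀ i ∈ s, padicValNat p (n / a i)! = ∑ j ∈ Ico 1 b, n / p ^ j / a i := by
    intro i _
    rw [padicValNat_factorial ((Nat.log_mono_right (Nat.div_le_self _ _)).trans_lt (lt_add_one _))]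
    exact sum_congr rfl fun j _ => by rw [Nat.div_div_eq_div_mul, Nat.div_div_eq_div_mul, mul_comm]
  have term_lt : ∀ j ∈ Ico 1 b, ∑ i ∈ s, n / p ^ j / a i < n / p ^ j := by
    intro j hj
    obtain ⟨hj1, hjb⟩ := mem_Ico.mp hj
    have hn : n ≠ 0 := by rintro rfl; simp [b] at hjb; omega
    exact sum_div_lt_self_of_sum_inv_lt_one h <| Nat.div_pos
      (Nat.pow_le_of_le_log hn (by omega)) (pow_pos hp.out.pos j)
  rw [sum_congr rfl legendre_div, sum_comm, padicValNat_factorial (lt_add_one _)]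
  calc Nat.log p n + ∑ j ∈ Ico 1 b, ∑ i ∈ s, n / p ^ j / a i
      = ∑ j ∈ Ico 1 b, (∑ i ∈ s, n / p ^ j / a i + 1) := by
        rw [sum_add_distrib, sum_const, card_Ico, smul_eq_mul, mul_one, add_comm]; rfl
    _ ≤ ∑ j ∈ Ico 1 b, n / p ^ j := sum_le_sum term_lt

theorem log_le_padicValNat_factorial_div_prod {p : ℕ} [Fact p.Prime]
    (h : ∑ i ∈ s, (1 : ℚ) / a i < 1) (n : ℕ) :
    Nat.log p n ≤ padicValNat p (n ! / ∏ i ∈ s, (n / a i)!) := by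
  rw [padicValNat.div_of_dvd (prod_factorial_div_dvd_factorial h n),
    padicValNat_finset_prod fun i _ => factorial_ne_zero _]
  have := log_add_sum_padicValNat_factorial_div_le (p := p) h n
  omega

theorem factorial_div_prod_pos (h : ∑ i ∈ s, (1 : ℚ) / a i < 1) (n : ℕ) :
    0 < n ! / ∏ i ∈ s, (n / a i)! :=
  Nat.div_pos (Nat.le_of_dvd (factorial_pos n) (prod_factorial_div_dvd_factorial h n))
    (prod_pos fun _ _ => factorial_pos _)

end FactorialRatio

theorem lcmUpTo_dvd_of_log_le_padicValNat {n c : ℕ} (hc : c ≠ 0)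
    (h : ∀ p, p.Prime → Nat.log p n ≤ padicValNat p c) : lcmUpTo n ∣ c := by
  refine Finset.lcm_dvd fun m hm => ?_
  obtain ⟨hm1, hmn⟩ := mem_Icc.mp hm
  refine (factorization_prime_le_iff_dvd (Nat.one_le_iff_ne_zero.mp hm1) hc).mp fun p hp => ?_
  have := Fact.mk hp
  rw [factorization_def _ hp, factorization_def _ hp]
  exact (padicValNat_le_nat_log m).trans ((Nat.log_mono_right hmn).trans (h p hp))

theorem two_le_alphaAux (i : ℕ) : 2 ≤ alphaAux i := by
  induction i with
  | zero => simp [alphaAux]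
  | succ i ih =>
    have : alphaAux i + 2 ≤ alphaAux i ^ 2 := by nlinarith
    simp only [alphaAux]
    omega

theorem sum_inv_alphaAux_add_inv_pred (k : ℕ) :
    ∑ i ∈ range k, (1 : ℚ) / alphaAux i + 1 / (alphaAux k - 1) = 1 := by
  induction k with
  | zero => norm_num [alphaAux]
  | succ k ih =>
    have h2 : (2 : ℚ) ≤ alphaAux k := by exact_mod_cast two_le_alphaAux k
    have hsucc : (alphaAux (k + 1) : ℚ) - 1 = alphaAux k * (alphaAux k - 1) := by
      simp only [alphaAux]
      rw [Nat.cast_add, Nat.cast_sub (Nat.le_self_pow two_ne_zero _)]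
      push_cast
      ring
    have step : (1 : ℚ) / alphaAux k + 1 / (alphaAux k * (alphaAux k - 1))
        = 1 / (alphaAux k - 1) := by
      field_simp [show (alphaAux k : ℚ) - 1 ≠ 0 by linarith]
      ring
    rw [sum_range_succ, hsucc]
    linarith

theorem sum_inv_alphaSeq_lt_one (k : ℕ) : ∑ i ∈ Icc 1 k, (1 : ℚ) / alphaSeq i < 1 := by
  have hsum : ∑ i ∈ Icc 1 k, (1 : ℚ) / alphaSeq i = ∑ i ∈ range k, (1 : ℚ) / alphaAux i := by
    rw [← Ico_add_one_right_eq_Icc, sum_Ico_eq_sum_range]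
    simp [alphaSeq]
  have h2 : (2 : ℚ) ≤ alphaAux k := by exact_mod_cast two_le_alphaAux k
  have tail_pos : (0 : ℚ) < 1 / (alphaAux k - 1) := one_div_pos.mpr (by linarith)
  linarith [sum_inv_alphaAux_add_inv_pred k]

theorem hansonC_valuation_general (n k : ℕ) :
    (∀ p : ℕ, p.Prime → Nat.log p n ≤ padicValNat p (hansonC n k)) ∧
    lcmUpTo n ≤ hansonC n k := by
  have hval : ∀ p : ℕ, p.Prime → Nat.log p n ≤ padicValNat p (hansonC n k) := fun p hp =>
    have := Fact.mk hp
    log_le_padicValNat_factorial_div_prod (sum_inv_alphaSeq_lt_one k) n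
  have hpos : 0 < hansonC n k := factorial_div_prod_pos (sum_inv_alphaSeq_lt_one k) n
  exact ⟨hval, Nat.le_of_dvd hpos (lcmUpTo_dvd_of_log_le_padicValNat hpos.ne' hval)⟩

/-- For `n ≥ 1`, `k ≥ 1` and a prime `p`, the `p`-adic valuation of `C(n,k)`
is at least `⌊log_p n⌋`, the greatest `α` with `p^α ≤ n`; consequently
`lcm(1, ..., n) ≤ C(n,k)`. -/
theorem hansonC_valuation (n k : ℕ) (hn : 1 ≤ n) (hk : 1 ≤ k) :
    (∀ p : ℕ, p.Prime → Nat.log p n ≤ padicValNat p (hansonC n k)) ∧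
    lcmUpTo n ≤ hansonC n k :=
  hansonC_valuation_general n k
end

section
/- For all natural numbers k ≥ 1 and n ≥ 2, C(n,k) < n^n / (⌊n/α_1⌋^{⌊n/α_1⌋} · ⌊n/α_2⌋^{⌊n/α_2⌋} · ... · ⌊n/α_k⌋^{⌊n/α_k⌋}) (as real numbers, with the convention 0⁰ = 1). -/
/-!
Write `mᵢ = ⌊n/αᵢ⌋` and `S = ∑ mᵢ`. The term of the multinomial expansion of `S^S` with exponents
`mᵢ` gives `S! ∏ mᵢ^mᵢ ≤ S^S ∏ mᵢ!`. The telescoping identity `∑_{i ≤ k} 1/αᵢ = 1 - 1/(α_{k+1} - 1)`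
gives `S < n`, and `m ↦ m!/m^m` is strictly decreasing for `m ≥ 1`, so `n!/n^n < S!/S^S`.
Combining the two, `n! ∏ mᵢ^mᵢ < n^n ∏ mᵢ!`.
-/

open Finset Nat

theorem Nat.multinomial_mul_prod_pow_self_le {ι : Type*} (s : Finset ι) (f : ι → ℕ) :
    multinomial s f * ∏ i ∈ s, f i ^ f i ≤ (∑ i ∈ s, f i) ^ ∑ i ∈ s, f i := by
  classical
  let g : ι → ℕ := fun i ↦ if i ∈ s then f i else 0
  have hfg : ∀ i ∈ s, f i = g i := fun i hi ↦ (if_pos hi).symm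
  have hg : g ∈ piAntidiag s (∑ i ∈ s, f i) := by
    rw [mem_piAntidiag, sum_congr rfl hfg]
    exact ⟨rfl, fun i hi ↦ by by_contra h; exact hi (if_neg h)⟩
  have hterm : multinomial s f * ∏ i ∈ s, f i ^ f i = multinomial s g * ∏ i ∈ s, f i ^ g i := by
    rw [multinomial_congr hfg, prod_congr rfl fun i hi ↦ congrArg (f i ^ ·) (hfg i hi)]
  rw [sum_pow_eq_sum_piAntidiag, hterm]
  exact single_le_sum (f := fun k ↦ multinomial s k * ∏ i ∈ s, f i ^ k i)
    (fun _ _ ↦ Nat.zero_le _) hg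

theorem Nat.factorial_mul_pow_self_lt {m n : ℕ} (hm : 1 ≤ m) (hmn : m < n) :
    n ! * m ^ m < n ^ n * m ! := by
  induction n, hmn using Nat.le_induction with
  | base =>
    have : m ^ m < (m + 1) ^ m := Nat.pow_lt_pow_left (lt_add_one m) (by omega)
    calc (m + 1)! * m ^ m = (m + 1) * m ! * m ^ m := by rw [factorial_succ]
      _ < (m + 1) * m ! * (m + 1) ^ m := by gcongr
      _ = (m + 1) ^ (m + 1) * m ! := by ring
  | succ n hmn ih =>
    calc (n + 1)! * m ^ m = (n + 1) * (n ! * m ^ m) := by rw [factorial_succ, mul_assoc]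
      _ < (n + 1) * (n ^ n * m !) := by gcongr
      _ ≤ (n + 1) * ((n + 1) ^ n * m !) := by gcongr; omega
      _ = (n + 1) ^ (n + 1) * m ! := by ring

theorem Nat.factorial_mul_prod_pow_self_lt {ι : Type*} (s : Finset ι) (f : ι → ℕ) {n : ℕ}
    (hpos : 1 ≤ ∑ i ∈ s, f i) (hlt : ∑ i ∈ s, f i < n) :
    n ! * ∏ i ∈ s, f i ^ f i < n ^ n * ∏ i ∈ s, (f i)! := by
  set S := ∑ i ∈ s, f i
  have hspec : (∏ i ∈ s, (f i)!) * multinomial s f = S ! := multinomial_spec s f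
  refine Nat.lt_of_mul_lt_mul_right (a := multinomial s f) ?_
  calc n ! * (∏ i ∈ s, f i ^ f i) * multinomial s f
      = n ! * (multinomial s f * ∏ i ∈ s, f i ^ f i) := by ring
    _ ≤ n ! * S ^ S := by gcongr; exact multinomial_mul_prod_pow_self_le s f
    _ < n ^ n * S ! := factorial_mul_pow_self_lt hpos hlt
    _ = n ^ n * (∏ i ∈ s, (f i)!) * multinomial s f := by rw [← hspec, mul_assoc]

theorem alphaSeq_one : alphaSeq 1 = 2 := rfl

theorem alphaSeq_add_two (k : ℕ) :
    alphaSeq (k + 2) = alphaSeq (k + 1) ^ 2 - alphaSeq (k + 1) + 1 := rfl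

theorem two_le_alphaSeq : ∀ i, 2 ≤ alphaSeq i
  | 0 | 1 => le_rfl
  | i + 2 => by
    have h := two_le_alphaSeq (i + 1)
    have : 2 * alphaSeq (i + 1) ≤ alphaSeq (i + 1) ^ 2 := by nlinarith
    rw [alphaSeq_add_two]
    omega

theorem cast_alphaSeq_add_two (k : ℕ) :
    (alphaSeq (k + 2) : ℚ) = (alphaSeq (k + 1) : ℚ) ^ 2 - alphaSeq (k + 1) + 1 := by
  have : alphaSeq (k + 1) ≤ alphaSeq (k + 1) ^ 2 := Nat.le_self_pow two_ne_zero _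
  rw [alphaSeq_add_two]
  push_cast [this]
  ring

theorem sum_inv_alphaSeq (k : ℕ) :
    ∑ i ∈ Icc 1 k, (alphaSeq i : ℚ)⁻¹ = 1 - ((alphaSeq (k + 1) : ℚ) - 1)⁻¹ := by
  induction k with
  | zero => norm_num [alphaSeq_one]
  | succ k ih =>
    have h2 : (2 : ℚ) ≤ alphaSeq (k + 1) := by exact_mod_cast two_le_alphaSeq (k + 1)
    rw [sum_Icc_succ_top (by omega), ih, cast_alphaSeq_add_two]
    have h1 : (alphaSeq (k + 1) : ℚ) - 1 ≠ 0 := by linarith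
    have h0 : (alphaSeq (k + 1) : ℚ) ≠ 0 := by linarith
    field_simp
    ring

theorem sum_div_alphaSeq_lt {n : ℕ} (hn : 0 < n) (k : ℕ) :
    ∑ i ∈ Icc 1 k, n / alphaSeq i < n := by
  have h2 : (2 : ℚ) ≤ alphaSeq (k + 1) := by exact_mod_cast two_le_alphaSeq (k + 1)
  have hn' : (0 : ℚ) < n := by exact_mod_cast hn
  suffices h : ((∑ i ∈ Icc 1 k, n / alphaSeq i : ℕ) : ℚ) < n by exact_mod_cast h
  calc ((∑ i ∈ Icc 1 k, n / alphaSeq i : ℕ) : ℚ) ≤ ∑ i ∈ Icc 1 k, (n : ℚ) / alphaSeq i := by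
        push_cast; exact sum_le_sum fun i _ ↦ Nat.cast_div_le
    _ = n * (1 - ((alphaSeq (k + 1) : ℚ) - 1)⁻¹) := by
        simp_rw [div_eq_mul_inv, ← mul_sum, sum_inv_alphaSeq]
    _ < n := by
        have : (0 : ℚ) < ((alphaSeq (k + 1) : ℚ) - 1)⁻¹ := inv_pos.mpr (by linarith)
        nlinarith

/-- For `k ≥ 1` and `n ≥ 2`,
`C(n,k) < n^n / (⌊n/α_1⌋^⌊n/α_1⌋ ⋯ ⌊n/α_k⌋^⌊n/α_k⌋)` (with `0⁰ = 1`). -/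
theorem hansonC_lt (n k : ℕ) (hk : 1 ≤ k) (hn : 2 ≤ n) :
    (hansonC n k : ℝ)
      < (n : ℝ) ^ n /
          ∏ i ∈ Finset.Icc 1 k, ((n / alphaSeq i : ℕ) : ℝ) ^ (n / alphaSeq i : ℕ) := by
  set m : ℕ → ℕ := fun i ↦ n / alphaSeq i
  have hpos : 1 ≤ ∑ i ∈ Icc 1 k, m i :=
    calc 1 ≤ m 1 := by simp only [m, alphaSeq_one]; omega
      _ ≤ ∑ i ∈ Icc 1 k, m i := single_le_sum (fun _ _ ↦ Nat.zero_le _) (by simp [hk])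
  have key := factorial_mul_prod_pow_self_lt (Icc 1 k) m hpos (sum_div_alphaSeq_lt (by omega) k)
  have hfact : (0 : ℝ) < ∏ i ∈ Icc 1 k, ((m i)! : ℝ) := by positivity
  have hpow : (0 : ℝ) < ∏ i ∈ Icc 1 k, (m i : ℝ) ^ m i :=
    prod_pos fun i _ ↦ by exact_mod_cast Nat.pow_self_pos
  calc (hansonC n k : ℝ) ≤ (n ! : ℝ) / ∏ i ∈ Icc 1 k, ((m i)! : ℝ) := by
        rw [hansonC, ← Nat.cast_prod]; exact Nat.cast_div_le
    _ < (n : ℝ) ^ n / ∏ i ∈ Icc 1 k, (m i : ℝ) ^ m i := by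
        rw [div_lt_div_iff₀ hfact hpow]; exact_mod_cast key
end
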